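/- arXiv:2401.10200 — 3 statements merged into one kernel-verified Lean document; each statement's English description precedes it below -/
import Mathlib

section
/- Let n ≥ 1, let R, R̂ ⊆ 𝔽₂ⁿ be 𝔽₂-linear subspaces, let Δ ∈ 𝔽₂ⁿ ∖ R and Δ̂ ∈ 𝔽₂ⁿ ∖ R̂, and let x₀, z₀, x₁, z₁ ∈ 𝔽₂ⁿ satisfy x₀ + x₁ ∉ R̂⊥ or z₀ + z₁ ∉ R⊥. Then for every finite-dimensional complex vector space V and every linear operator ρ on ℂ[𝔽₂ⁿ] ⊗ V, writing each Pauli operator P for P ⊗ id_V, one has ∑_{x ∈ R+Δ} ∑_{z ∈ R̂+Δ̂} (Z^z X^x)(X^{x₀} Z^{z₀})(X^x Z^z) · ρ · (Z^z X^x)(Z^{z₁} X^{x₁})(X^x Z^z) = 0. -/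
/-!
Pauli Twirl over Affine Subspaces (Lemma 2.2 of "Quantum State Obfuscation from
Classical Oracles").

We work in the Hilbert space `ℂ[𝔽₂ⁿ]`, formalized as `EuclideanSpace ℂ (Fin n → ZMod 2)`,
with Pauli operators `X^x |v⟩ = |v + x⟩` and `Z^z |v⟩ = (−1)^{z·v} |v⟩`.
-/

open scoped BigOperators

noncomputable section

attribute [local instance] Classical.propDecidable

abbrev Fvec (n : ℕ) : Type := Fin n → ZMod 2

abbrev QSpace (n : ℕ) : Type := EuclideanSpace ℂ (Fvec n)

/-- The ±1 lift of a bit: `+1` if `b = 0` and `−1` if `b = 1`. -/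
def sgn (b : ZMod 2) : ℂ := if b = 0 then 1 else -1

/-- The dot product over `𝔽₂`. -/
def dotp {n : ℕ} (x y : Fvec n) : ZMod 2 := ∑ i, x i * y i

/-- The Pauli operator `X^x`, acting by `X^x |v⟩ = |v + x⟩`. -/
def PauliX {n : ℕ} (x : Fvec n) : QSpace n →ₗ[ℂ] QSpace n where
  toFun ψ := WithLp.toLp 2 (fun v => ψ (v + x))
  map_add' := fun _ _ => rfl
  map_smul' := fun _ _ => rfl

/-- The Pauli operator `Z^z`, acting by `Z^z |v⟩ = (−1)^{z·v} |v⟩`. -/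
def PauliZ {n : ℕ} (z : Fvec n) : QSpace n →ₗ[ℂ] QSpace n where
  toFun ψ := WithLp.toLp 2 (fun v => sgn (dotp z v) * ψ v)
  map_add' := fun f g => by ext v; simp [mul_add]
  map_smul' := fun c f => by ext v; simp [mul_left_comm]

/-- The orthogonal complement `R⊥ = {w : w·r = 0 for all r ∈ R}` with respect to the
`𝔽₂` dot product. -/
def dualSub {n : ℕ} (R : Submodule (ZMod 2) (Fvec n)) : Submodule (ZMod 2) (Fvec n) where
  carrier := {w | ∀ r ∈ R, dotp w r = 0}
  add_mem' := by
    intro a b ha hb r hr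
    have h : dotp (a + b) r = dotp a r + dotp b r := by
      simp [dotp, add_mul, Finset.sum_add_distrib]
    rw [h, ha r hr, hb r hr, add_zero]
  zero_mem' := by
    intro r hr
    simp [dotp]
  smul_mem' := by
    intro c a ha r hr
    have h : dotp (c • a) r = c * dotp a r := by
      simp [dotp, Finset.mul_sum, mul_assoc]
    rw [h, ha r hr, mul_zero]

/-!
Conjugating a Pauli operator by another Pauli operator only multiplies it by a sign, and these
signs are values of the characters `v ↦ (−1)^{w·v}` of `𝔽₂ⁿ`. Hence the summand indexed by
`(x, z)` is `(−1)^{(z₀+z₁)·x + (x₀+x₁)·z}` times one fixed operator, and the double sum of the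
signs factors as a sum over `R + Δ` times a sum over `R̂ + Δ̂`. The hypothesis says that one of
the two characters is nontrivial on the corresponding subspace, and the sum of a nontrivial
character over a coset of a subgroup vanishes.
-/

lemma sgn_add (a b : ZMod 2) : sgn (a + b) = sgn a * sgn b := by
  have h01 : ∀ c : ZMod 2, c = 0 ∨ c = 1 := by decide
  rcases h01 a with rfl | rfl <;> rcases h01 b with rfl | rfl <;>
    simp [sgn, show (1 + 1 : ZMod 2) = 0 from rfl]

lemma Fvec.add_self {n : ℕ} (v : Fvec n) : v + v = 0 :=
  funext fun _ => CharTwo.add_self_eq_zero _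

lemma dotp_eq_dotProduct {n : ℕ} (x y : Fvec n) : dotp x y = x ⬝ᵥ y := rfl

def dotpChar {n : ℕ} (w : Fvec n) : AddChar (Fvec n) ℂ where
  toFun v := sgn (dotp w v)
  map_zero_eq_one' := by simp [dotp, sgn]
  map_add_eq_mul' u v := by rw [dotp_eq_dotProduct, dotProduct_add, sgn_add]; rfl

section dotpChar

variable {n : ℕ}

lemma dotpChar_apply (w v : Fvec n) : dotpChar w v = sgn (dotp w v) := rfl

lemma dotpChar_add_left (w w' v : Fvec n) :
    dotpChar (w + w') v = dotpChar w v * dotpChar w' v := by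
  simp only [dotpChar_apply, dotp_eq_dotProduct, add_dotProduct, sgn_add]

lemma dotpChar_comm (w v : Fvec n) : dotpChar w v = dotpChar v w := by
  simp only [dotpChar_apply, dotp_eq_dotProduct, dotProduct_comm]

lemma dotpChar_mul_self (w v : Fvec n) : dotpChar w v * dotpChar w v = 1 := by
  rw [← AddChar.map_add_eq_mul, Fvec.add_self, AddChar.map_zero_eq_one]

lemma sum_dotpChar_coset_eq_zero (R : Submodule (ZMod 2) (Fvec n)) {w : Fvec n}
    (hw : w ∉ dualSub R) (Δ : Fvec n) : ∑ x : R, dotpChar w (x + Δ) = 0 := by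
  obtain ⟨r, hr, hwr⟩ : ∃ r ∈ R, dotp w r ≠ 0 := by simpa [dualSub] using hw
  let ψ : AddChar R ℂ := (dotpChar w).compAddMonoidHom R.subtype.toAddMonoidHom
  have hψ : ψ ≠ 1 := AddChar.ne_one_iff.2 ⟨⟨r, hr⟩, by norm_num [ψ, dotpChar_apply, sgn, hwr]⟩
  simp only [AddChar.map_add_eq_mul, ← Finset.sum_mul]
  exact mul_eq_zero_of_left (AddChar.sum_eq_zero_of_ne_one hψ) _

end dotpChar

section Pauli

variable {n : ℕ}

lemma PauliX_apply (x : Fvec n) (ψ : QSpace n) (v : Fvec n) : PauliX x ψ v = ψ (v + x) := rfl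

lemma PauliZ_apply (z : Fvec n) (ψ : QSpace n) (v : Fvec n) :
    PauliZ z ψ v = dotpChar z v * ψ v := rfl

theorem conj_PauliX_comp_PauliZ (a b x z : Fvec n) :
    PauliZ a ∘ₗ PauliX b ∘ₗ PauliX x ∘ₗ PauliZ z ∘ₗ PauliX b ∘ₗ PauliZ a
      = (dotpChar z b * dotpChar a x) • (PauliX x ∘ₗ PauliZ z) := by
  ext ψ v
  have hv : v + b + x + b = v + x := by
    rw [add_right_comm, add_assoc v, Fvec.add_self, add_zero]
  simp only [LinearMap.comp_apply, LinearMap.smul_apply, PauliX_apply, PauliZ_apply,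
    PiLp.smul_apply, smul_eq_mul, hv, AddChar.map_add_eq_mul]
  linear_combination
    dotpChar z v * dotpChar z b * dotpChar z x * dotpChar a x * ψ (v + x) * dotpChar_mul_self a v

theorem conj_PauliZ_comp_PauliX (a b x z : Fvec n) :
    PauliZ a ∘ₗ PauliX b ∘ₗ PauliZ z ∘ₗ PauliX x ∘ₗ PauliX b ∘ₗ PauliZ a
      = (dotpChar z b * dotpChar a x) • (PauliZ z ∘ₗ PauliX x) := by
  ext ψ v
  have hv : v + b + x + b = v + x := by
    rw [add_right_comm, add_assoc v, Fvec.add_self, add_zero]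
  simp only [LinearMap.comp_apply, LinearMap.smul_apply, PauliX_apply, PauliZ_apply,
    PiLp.smul_apply, smul_eq_mul, hv, AddChar.map_add_eq_mul]
  linear_combination
    dotpChar z v * dotpChar z b * dotpChar a x * ψ (v + x) * dotpChar_mul_self a v

end Pauli

theorem rTensor_conj_comp_rTensor_conj {n : ℕ} (V : Type*) [AddCommGroup V] [Module ℂ V]
    (ρ : TensorProduct ℂ (QSpace n) V →ₗ[ℂ] TensorProduct ℂ (QSpace n) V)
    (a b x₀ z₀ x₁ z₁ : Fvec n) :
    LinearMap.rTensor V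
        (PauliZ a ∘ₗ PauliX b ∘ₗ PauliX x₀ ∘ₗ PauliZ z₀ ∘ₗ PauliX b ∘ₗ PauliZ a) ∘ₗ ρ ∘ₗ
      LinearMap.rTensor V
        (PauliZ a ∘ₗ PauliX b ∘ₗ PauliZ z₁ ∘ₗ PauliX x₁ ∘ₗ PauliX b ∘ₗ PauliZ a)
      = (dotpChar (z₀ + z₁) b * dotpChar (x₀ + x₁) a) •
          (LinearMap.rTensor V (PauliX x₀ ∘ₗ PauliZ z₀) ∘ₗ ρ ∘ₗ
            LinearMap.rTensor V (PauliZ z₁ ∘ₗ PauliX x₁)) := by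
  rw [conj_PauliX_comp_PauliZ, conj_PauliZ_comp_PauliX, LinearMap.rTensor_smul,
    LinearMap.rTensor_smul, dotpChar_add_left, dotpChar_add_left, dotpChar_comm x₀,
    dotpChar_comm x₁]
  simp only [LinearMap.comp_smul, LinearMap.smul_comp, smul_smul]
  congr 1
  ring

theorem pauli_twirl_over_affine_subspaces_general
    {n : ℕ}
    (R Rhat : Submodule (ZMod 2) (Fvec n))
    (Δ Δhat : Fvec n)
    (x₀ z₀ x₁ z₁ : Fvec n)
    (h : x₀ + x₁ ∉ dualSub Rhat ∨ z₀ + z₁ ∉ dualSub R)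
    (V : Type*) [AddCommGroup V] [Module ℂ V]
    (ρ : TensorProduct ℂ (QSpace n) V →ₗ[ℂ] TensorProduct ℂ (QSpace n) V) :
    ∑ x : R, ∑ z : Rhat,
      (LinearMap.rTensor V
          (PauliZ ((z : Fvec n) + Δhat) ∘ₗ PauliX ((x : Fvec n) + Δ) ∘ₗ
            PauliX x₀ ∘ₗ PauliZ z₀ ∘ₗ PauliX ((x : Fvec n) + Δ) ∘ₗ
              PauliZ ((z : Fvec n) + Δhat))) ∘ₗ
        ρ ∘ₗ
      (LinearMap.rTensor V
          (PauliZ ((z : Fvec n) + Δhat) ∘ₗ PauliX ((x : Fvec n) + Δ) ∘ₗ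
            PauliZ z₁ ∘ₗ PauliX x₁ ∘ₗ PauliX ((x : Fvec n) + Δ) ∘ₗ
              PauliZ ((z : Fvec n) + Δhat)))
      = 0 := by
  simp only [rTensor_conj_comp_rTensor_conj, ← Finset.sum_smul, ← Finset.sum_mul_sum]
  rcases h with hx | hz
  · rw [sum_dotpChar_coset_eq_zero Rhat hx, mul_zero, zero_smul]
  · rw [sum_dotpChar_coset_eq_zero R hz, zero_mul, zero_smul]

/-- **Pauli twirl over affine subspaces.**
Let `R, R̂ ⊆ 𝔽₂ⁿ` be subspaces, `Δ ∉ R`, `Δ̂ ∉ R̂`, and let `x₀, z₀, x₁, z₁` be such that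
`x₀ + x₁ ∉ R̂⊥` or `z₀ + z₁ ∉ R⊥`.  Then for any finite-dimensional complex vector space
`V` and any linear operator `ρ` on `ℂ[𝔽₂ⁿ] ⊗ V` (writing each Pauli `P` for `P ⊗ id_V`):
`∑_{x ∈ R+Δ, z ∈ R̂+Δ̂} (Z^z X^x)(X^{x₀} Z^{z₀})(X^x Z^z) ρ (Z^z X^x)(Z^{z₁} X^{x₁})(X^x Z^z) = 0`. -/
theorem pauli_twirl_over_affine_subspaces
    {n : ℕ} (hn : 1 ≤ n)
    (R Rhat : Submodule (ZMod 2) (Fvec n))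
    (Δ Δhat : Fvec n) (hΔ : Δ ∉ R) (hΔhat : Δhat ∉ Rhat)
    (x₀ z₀ x₁ z₁ : Fvec n)
    (h : x₀ + x₁ ∉ dualSub Rhat ∨ z₀ + z₁ ∉ dualSub R)
    (V : Type*) [AddCommGroup V] [Module ℂ V] [FiniteDimensional ℂ V]
    (ρ : TensorProduct ℂ (QSpace n) V →ₗ[ℂ] TensorProduct ℂ (QSpace n) V) :
    ∑ x : R, ∑ z : Rhat,
      (LinearMap.rTensor V
          (PauliZ ((z : Fvec n) + Δhat) ∘ₗ PauliX ((x : Fvec n) + Δ) ∘ₗ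
            PauliX x₀ ∘ₗ PauliZ z₀ ∘ₗ PauliX ((x : Fvec n) + Δ) ∘ₗ
              PauliZ ((z : Fvec n) + Δhat))) ∘ₗ
        ρ ∘ₗ
      (LinearMap.rTensor V
          (PauliZ ((z : Fvec n) + Δhat) ∘ₗ PauliX ((x : Fvec n) + Δ) ∘ₗ
            PauliZ z₁ ∘ₗ PauliX x₁ ∘ₗ PauliX ((x : Fvec n) + Δ) ∘ₗ
              PauliZ ((z : Fvec n) + Δhat)))
      = 0 :=
  pauli_twirl_over_affine_subspaces_general R Rhat Δ Δhat x₀ z₀ x₁ z₁ h V ρ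

end
end

section
/- Let E be a complex inner product space, let K be a nonempty finite set and N ≥ 1. For each k ∈ K let ψ_k ∈ E with ‖ψ_k‖ ≤ 1, let D_k be an orthogonal projection on E, and let Π_{k,1}, …, Π_{k,N} be orthogonal projections on E with Π_{k,i}Π_{k,j} = 0 for i ≠ j and ∑_{i=1}^N Π_{k,i} ψ_k = ψ_k. Then (1/|K|)∑_{k∈K} ‖D_k ψ_k‖² − ∑_{i=1}^N (1/|K|)∑_{k∈K} ‖D_k Π_{k,i} ψ_k‖² ≤ N · ( ∑_{i≠j} (1/|K|)∑_{k∈K} ‖Π_{k,j} D_k Π_{k,i} ψ_k‖² )^{1/2}. -/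
/-!
Writing `ψᵢ = Πᵢ ψ`, the square `‖D ψ‖² = ‖∑ᵢ D ψᵢ‖²` is the diagonal `∑ᵢ ‖D ψᵢ‖²` plus the cross
terms `⟪D ψᵢ, D ψⱼ⟫ = ⟪Πⱼ D ψᵢ, ψⱼ⟫`, because `D` and `Πⱼ` are symmetric idempotents. Cauchy–Schwarz
over the triples `(k, i, j)` bounds the average of the cross terms by the square root of the
right-hand sum times `√(N · 𝔼ₖ ∑ⱼ ‖Πₖⱼ ψₖ‖²) ≤ √N ≤ N`, using `∑ⱼ ‖Πⱼ ψ‖² = ‖ψ‖² ≤ 1`.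
-/

open scoped InnerProductSpace
open Finset RCLike

theorem sum_sum_eq_sum_diag_add_sum_offDiag {ι M : Type*} [Fintype ι] [DecidableEq ι]
    [AddCommMonoid M] (x : ι → ι → M) :
    ∑ i, ∑ j, x i j = ∑ i, x i i + ∑ i, ∑ j, if i = j then 0 else x i j := by
  rw [← sum_add_distrib]
  refine sum_congr rfl fun i _ => ?_
  rw [← add_sum_erase _ _ (mem_univ i), sum_ite, sum_const_zero, zero_add, filter_ne]

section InnerProductSpace

variable {𝕜 E ι : Type*} [RCLike 𝕜] [NormedAddCommGroup E] [InnerProductSpace 𝕜 E] [Fintype ι]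

theorem norm_sum_sq_eq_sum_sum_re_inner (v : ι → E) :
    ‖∑ i, v i‖ ^ 2 = ∑ i, ∑ j, re ⟪v i, v j⟫_𝕜 := by
  rw [← inner_self_eq_norm_sq (𝕜 := 𝕜), sum_inner, map_sum]
  simp_rw [inner_sum, map_sum]

theorem sum_norm_sq_apply_eq_norm_sq {P : ι → E →ₗ[𝕜] E} (hP : ∀ i, (P i).IsSymmetric)
    (horth : Pairwise fun i j => P i ∘ₗ P j = 0) {x : E} (hx : ∑ i, P i x = x) :
    ∑ i, ‖P i x‖ ^ 2 = ‖x‖ ^ 2 := by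
  classical
  have hcross : ∀ i j, i ≠ j → ⟪P i x, P j x⟫_𝕜 = 0 := fun i j hij => by
    rw [hP, ← LinearMap.comp_apply, horth hij, LinearMap.zero_apply, inner_zero_right]
  conv_rhs => rw [← hx]
  rw [norm_sum_sq_eq_sum_sum_re_inner (𝕜 := 𝕜), sum_sum_eq_sum_diag_add_sum_offDiag]
  simp +contextual [hcross]

theorem re_inner_apply_apply_le {D Q : E →ₗ[𝕜] E} (hD : D.IsSymmetricProjection)
    (hQ : Q.IsSymmetricProjection) (x y : E) :
    re ⟪D y, D (Q x)⟫_𝕜 ≤ ‖Q x‖ * ‖Q (D y)‖ := by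
  have hDD : D (D y) = D y := LinearMap.congr_fun hD.isIdempotentElem.eq y
  have hQQ : Q (Q x) = Q x := LinearMap.congr_fun hQ.isIdempotentElem.eq x
  have hmove : ⟪D y, D (Q x)⟫_𝕜 = ⟪Q (D y), Q x⟫_𝕜 := by
    rw [← hD.isSymmetric, hDD, hQ.isSymmetric, hQQ]
  rw [hmove, mul_comm]
  exact (re_le_norm _).trans (norm_inner_le_norm _ _)

theorem norm_sq_apply_sub_sum_norm_sq_apply_le [DecidableEq ι] {D : E →ₗ[𝕜] E}
    {P : ι → E →ₗ[𝕜] E} (hD : D.IsSymmetricProjection) (hP : ∀ i, (P i).IsSymmetricProjection)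
    {x : E} (hx : ∑ i, P i x = x) :
    ‖D x‖ ^ 2 - ∑ i, ‖D (P i x)‖ ^ 2
      ≤ ∑ i, ∑ j, if i = j then 0 else ‖P j x‖ * ‖P j (D (P i x))‖ := by
  have hDx : D x = ∑ i, D (P i x) := by rw [← map_sum, hx]
  rw [hDx, norm_sum_sq_eq_sum_sum_re_inner (𝕜 := 𝕜), sum_sum_eq_sum_diag_add_sum_offDiag]
  simp only [inner_self_eq_norm_sq, add_sub_cancel_left]
  gcongr with i _ j _
  split_ifs
  · rfl
  · exact re_inner_apply_apply_le hD (hP j) x (P i x)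

end InnerProductSpace

theorem Real.mul_sum_mul_le_sqrt_mul_sqrt {τ : Type*} (s : Finset τ) (a b : τ → ℝ) {w : ℝ}
    (hw : 0 ≤ w) :
    w * ∑ t ∈ s, a t * b t ≤ √(w * ∑ t ∈ s, a t ^ 2) * √(w * ∑ t ∈ s, b t ^ 2) := by
  rw [Real.sqrt_mul hw, Real.sqrt_mul hw, mul_mul_mul_comm, Real.mul_self_sqrt hw]
  exact mul_le_mul_of_nonneg_left (Real.sum_mul_le_sqrt_mul_sqrt s a b) hw

theorem Real.sqrt_natCast_le (N : ℕ) : √(N : ℝ) ≤ N := by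
  rw [Real.sqrt_le_self_iff, Nat.cast_eq_zero, Nat.one_le_cast]
  omega

theorem map_distinguish_general
    {E : Type*} [NormedAddCommGroup E] [InnerProductSpace ℂ E]
    {K : Type*} [Fintype K] {N : ℕ}
    (ψ : K → E) (hψ : ∀ k, ‖ψ k‖ ≤ 1)
    (D : K → E →ₗ[ℂ] E)
    (hDidem : ∀ k, D k ∘ₗ D k = D k)
    (hDsa : ∀ k (u v : E), (inner ℂ (D k u) v : ℂ) = inner ℂ u (D k v))
    (P : K → Fin N → (E →ₗ[ℂ] E))
    (hPidem : ∀ k i, P k i ∘ₗ P k i = P k i)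
    (hPsa : ∀ k i (u v : E), (inner ℂ (P k i u) v : ℂ) = inner ℂ u (P k i v))
    (hPorth : ∀ k i j, i ≠ j → P k i ∘ₗ P k j = 0)
    (hPψ : ∀ k, ∑ i, P k i (ψ k) = ψ k) :
    (1 / (Fintype.card K : ℝ)) * (∑ k, ‖D k (ψ k)‖ ^ 2)
        - ∑ i, (1 / (Fintype.card K : ℝ)) * ∑ k, ‖D k (P k i (ψ k))‖ ^ 2
      ≤ N * Real.sqrt (∑ i, ∑ j,
          if i = j then 0
          else (1 / (Fintype.card K : ℝ)) * ∑ k, ‖P k j (D k (P k i (ψ k)))‖ ^ 2) := by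
  set w : ℝ := 1 / Fintype.card K with hw_def
  have hw : 0 ≤ w := by positivity
  let a : K × Fin N × Fin N → ℝ := fun t => ‖P t.1 t.2.2 (ψ t.1)‖
  let b : K × Fin N × Fin N → ℝ := fun t =>
    if t.2.1 = t.2.2 then 0 else ‖P t.1 t.2.2 (D t.1 (P t.1 t.2.1 (ψ t.1)))‖
  have hcomp : ∀ k, ∑ j, ‖P k j (ψ k)‖ ^ 2 = ‖ψ k‖ ^ 2 := fun k =>
    sum_norm_sq_apply_eq_norm_sq (hPsa k) (hPorth k) (hPψ k)
  have ha : w * ∑ t, a t ^ 2 ≤ N := by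
    rw [hw_def, one_div]
    refine inv_mul_le_of_le_mul₀ (by positivity) (by positivity) ?_
    calc ∑ t, a t ^ 2 = ∑ k, N * ‖ψ k‖ ^ 2 := by simp [a, Fintype.sum_prod_type, hcomp]
      _ ≤ ∑ k : K, (N : ℝ) * 1 := by gcongr with k; exact pow_le_one₀ (norm_nonneg _) (hψ k)
      _ = _ := by simp [mul_comm]
  have hb : w * ∑ t, b t ^ 2 = ∑ i, ∑ j,
      if i = j then 0 else w * ∑ k, ‖P k j (D k (P k i (ψ k)))‖ ^ 2 := by
    simp only [b, Fintype.sum_prod_type, mul_sum]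
    rw [sum_comm]
    refine sum_congr rfl fun i _ => ?_
    rw [sum_comm]
    refine sum_congr rfl fun j _ => ?_
    split_ifs <;> simp
  calc w * ∑ k, ‖D k (ψ k)‖ ^ 2 - ∑ i, w * ∑ k, ‖D k (P k i (ψ k))‖ ^ 2
      = w * ∑ k, (‖D k (ψ k)‖ ^ 2 - ∑ i, ‖D k (P k i (ψ k))‖ ^ 2) := by
        rw [sum_sub_distrib, mul_sub, ← mul_sum, sum_comm]
    _ ≤ w * ∑ t, a t * b t := by
        rw [Fintype.sum_prod_type]
        gcongr with k
        refine (norm_sq_apply_sub_sum_norm_sq_apply_le ⟨hDidem k, hDsa k⟩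
          (fun i => ⟨hPidem k i, hPsa k i⟩) (hPψ k)).trans_eq ?_
        simp [a, b, Fintype.sum_prod_type, mul_ite]
    _ ≤ √(w * ∑ t, a t ^ 2) * √(w * ∑ t, b t ^ 2) := Real.mul_sum_mul_le_sqrt_mul_sqrt _ _ _ hw
    _ ≤ N * √(∑ i, ∑ j, if i = j then 0 else w * ∑ k, ‖P k j (D k (P k i (ψ k)))‖ ^ 2) := by
        rw [hb]
        gcongr
        exact (Real.sqrt_le_sqrt ha).trans (Real.sqrt_natCast_le N)

/-- Let `K` be a nonempty finite set of keys and `N ≥ 1`.  For each `k ∈ K`, let `ψ_k`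
be a vector of norm at most `1`, `D_k` an orthogonal projection (a binary-outcome
distinguisher), and `P_{k,1}, …, P_{k,N}` pairwise-orthogonal projections with
`∑ᵢ P_{k,i} ψ_k = ψ_k`.  Then
`𝔼_k ‖D_k ψ_k‖² − ∑ᵢ 𝔼_k ‖D_k P_{k,i} ψ_k‖²
  ≤ N · (∑_{i ≠ j} 𝔼_k ‖P_{k,j} D_k P_{k,i} ψ_k‖²)^{1/2}`. -/
theorem map_distinguish
    {E : Type*} [NormedAddCommGroup E] [InnerProductSpace ℂ E]
    {K : Type*} [Fintype K] [Nonempty K] {N : ℕ} (hN : 1 ≤ N)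
    (ψ : K → E) (hψ : ∀ k, ‖ψ k‖ ≤ 1)
    (D : K → E →ₗ[ℂ] E)
    (hDidem : ∀ k, D k ∘ₗ D k = D k)
    (hDsa : ∀ k (u v : E), (inner ℂ (D k u) v : ℂ) = inner ℂ u (D k v))
    (P : K → Fin N → (E →ₗ[ℂ] E))
    (hPidem : ∀ k i, P k i ∘ₗ P k i = P k i)
    (hPsa : ∀ k i (u v : E), (inner ℂ (P k i u) v : ℂ) = inner ℂ u (P k i v))
    (hPorth : ∀ k i j, i ≠ j → P k i ∘ₗ P k j = 0)
    (hPψ : ∀ k, ∑ i, P k i (ψ k) = ψ k) :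
    (1 / (Fintype.card K : ℝ)) * (∑ k, ‖D k (ψ k)‖ ^ 2)
        - ∑ i, (1 / (Fintype.card K : ℝ)) * ∑ k, ‖D k (P k i (ψ k))‖ ^ 2
      ≤ N * Real.sqrt (∑ i, ∑ j,
          if i = j then 0
          else (1 / (Fintype.card K : ℝ)) * ∑ k, ‖P k j (D k (P k i (ψ k)))‖ ^ 2) :=
  map_distinguish_general ψ hψ D hDidem hDsa P hPidem hPsa hPorth hPψ
end

section
/- Let E be a complex inner product space, K a nonempty finite set, q ≥ 1 an integer, and ε ≥ 0. For each k ∈ K let ψ_k ∈ E be a unit vector, let Π_k and D_k be orthogonal projections on E, let O_k⁰, O_k¹ : E → E be unitaries with (O_k⁰ − O_k¹) ∘ (id − Π_k) = 0, and let A_{k,0}, …, A_{k,q} : E → E be unitaries. Define U_k^b := A_{k,q} O_k^b A_{k,q−1} O_k^b ⋯ O_k^b A_{k,0} for b ∈ {0,1}, and for 0 ≤ j ≤ q−1 define the prefix state φ_{k,j} := A_{k,j} O_k⁰ A_{k,j−1} ⋯ O_k⁰ A_{k,0} ψ_k. If (1/|K|)∑_{k∈K} ‖Π_k φ_{k,j}‖²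 ≤ ε for every 0 ≤ j ≤ q−1, then | (1/|K|)∑_{k∈K} ‖D_k U_k⁰ ψ_k‖² − (1/|K|)∑_{k∈K} ‖D_k U_k¹ ψ_k‖² | ≤ 4q√ε. -/
/-!
Run the two computations side by side. Each oracle call adds the error
`O⁰ φ - O¹ φ = O⁰ (Π φ) - O¹ (Π φ)`, of norm at most `2‖Π φ‖`; since all gates are isometries
these errors simply add up, so the final states are `2 ∑ⱼ ‖Π φⱼ‖`-close. As `D` is a
contraction and the states are unit vectors, the acceptance probabilities `‖D ·‖²` differ by
at most twice that. Averaging over the keys and bounding the mean of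
`‖Π φⱼ‖` by the square root of the mean of `‖Π φⱼ‖² ≤ ε` gives `4q√ε`.
-/

/-- The state of a `q`-query oracle-aided unitary adversary after running the first
`j + 1` local unitaries `A 0, …, A j`, interleaved with `j` oracle calls `O`:
`run A O ψ j = A_j O A_{j−1} O ⋯ O A_0 ψ`. -/
def run {E : Type*} [NormedAddCommGroup E] [InnerProductSpace ℂ E]
    (A : ℕ → (E ≃ₗᵢ[ℂ] E)) (O : E ≃ₗᵢ[ℂ] E) (ψ : E) : ℕ → E
  | 0 => A 0 ψ
  | (j + 1) => A (j + 1) (O (run A O ψ j))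

theorem LinearMap.IsSymmetricProjection.norm_apply_le {𝕜 E : Type*} [RCLike 𝕜]
    [SeminormedAddCommGroup E] [InnerProductSpace 𝕜 E] {T : E →ₗ[𝕜] E}
    (hT : T.IsSymmetricProjection) (v : E) : ‖T v‖ ≤ ‖v‖ := by
  have hTT : T (T v) = T v := LinearMap.congr_fun hT.isIdempotentElem.eq v
  have hsq : ‖T v‖ ^ 2 ≤ ‖v‖ * ‖T v‖ :=
    calc ‖T v‖ ^ 2 = RCLike.re (inner 𝕜 (T v) (T v)) := norm_sq_eq_re_inner _
      _ = RCLike.re (inner 𝕜 v (T v)) := by rw [hT.isSymmetric, hTT]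
      _ ≤ ‖v‖ * ‖T v‖ := re_inner_le_norm _ _
  nlinarith [norm_nonneg (T v), norm_nonneg v]

theorem abs_norm_sq_sub_norm_sq_le {F : Type*} [SeminormedAddCommGroup F] {x y : F}
    (hx : ‖x‖ ≤ 1) (hy : ‖y‖ ≤ 1) : |‖x‖ ^ 2 - ‖y‖ ^ 2| ≤ 2 * ‖x - y‖ := by
  rw [sq_sub_sq, abs_mul, abs_of_nonneg (by positivity : 0 ≤ ‖x‖ + ‖y‖)]
  exact mul_le_mul (by linarith) (abs_norm_sub_norm_le x y) (abs_nonneg _) zero_le_two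

theorem one_div_card_mul_sum_le_sqrt {K : Type*} [Fintype K] (f : K → ℝ) :
    1 / (Fintype.card K : ℝ) * ∑ k, f k ≤
      Real.sqrt (1 / (Fintype.card K : ℝ) * ∑ k, f k ^ 2) := by
  have hCS := sum_div_card_sq_le_sum_sq_div_card (s := Finset.univ) (f := f)
  rw [Finset.card_univ] at hCS
  rw [one_div_mul_eq_div, one_div_mul_eq_div]
  exact (le_abs_self _).trans (Real.abs_le_sqrt hCS)

theorem LinearIsometry.norm_apply_sub_apply_le_of_apply_sub_eq {𝕜 E F : Type*} [RCLike 𝕜]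
    [SeminormedAddCommGroup E] [NormedSpace 𝕜 E] [SeminormedAddCommGroup F] [NormedSpace 𝕜 F]
    {O₀ O₁ : E →ₗᵢ[𝕜] F} {v w : E} (h : O₀ (v - w) = O₁ (v - w)) :
    ‖O₀ v - O₁ v‖ ≤ 2 * ‖w‖ := by
  have hdiff : O₀ v - O₁ v = O₀ w - O₁ w := by
    rw [← sub_add_cancel v w, map_add, map_add, h]
    abel
  rw [hdiff, two_mul]
  exact (norm_sub_le _ _).trans_eq (by rw [O₀.norm_map, O₁.norm_map])

section run

variable {E : Type*} [NormedAddCommGroup E] [InnerProductSpace ℂ E]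
  (A : ℕ → (E ≃ₗᵢ[ℂ] E)) {O₀ O₁ : E ≃ₗᵢ[ℂ] E} {ψ : E}

theorem norm_run (O : E ≃ₗᵢ[ℂ] E) (ψ : E) (n : ℕ) : ‖run A O ψ n‖ = ‖ψ‖ := by
  induction n with
  | zero => simp [run]
  | succ j ih => simp [run, ih]

theorem norm_run_sub_run_le {P : E → E} (hO : ∀ v, O₀ (v - P v) = O₁ (v - P v)) (n : ℕ) :
    ‖run A O₀ ψ n - run A O₁ ψ n‖ ≤ ∑ j ∈ Finset.range n, 2 * ‖P (run A O₀ ψ j)‖ := by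
  induction n with
  | zero => simp [run]
  | succ j ih =>
    set r₀ := run A O₀ ψ j
    set r₁ := run A O₁ ψ j
    have hcall : ‖O₀ r₀ - O₁ r₀‖ ≤ 2 * ‖P r₀‖ :=
      LinearIsometry.norm_apply_sub_apply_le_of_apply_sub_eq
        (O₀ := O₀.toLinearIsometry) (O₁ := O₁.toLinearIsometry) (hO r₀)
    have hprev : ‖O₁ r₀ - O₁ r₁‖ = ‖r₀ - r₁‖ := by
      rw [← map_sub, LinearIsometryEquiv.norm_map]
    calc ‖run A O₀ ψ (j + 1) - run A O₁ ψ (j + 1)‖ = ‖O₀ r₀ - O₁ r₁‖ := by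
          simp only [run, ← map_sub, LinearIsometryEquiv.norm_map, r₀, r₁]
      _ ≤ ‖O₀ r₀ - O₁ r₀‖ + ‖O₁ r₀ - O₁ r₁‖ := norm_sub_le_norm_sub_add_norm_sub _ _ _
      _ ≤ ∑ i ∈ Finset.range (j + 1), 2 * ‖P (run A O₀ ψ i)‖ := by
          rw [Finset.sum_range_succ, hprev]
          linarith

theorem abs_norm_sq_apply_run_sub_le {D : E →ₗ[ℂ] E} (hD : ∀ w, ‖D w‖ ≤ ‖w‖) (hψ : ‖ψ‖ ≤ 1)
    {P : E → E} (hO : ∀ v, O₀ (v - P v) = O₁ (v - P v)) (n : ℕ) :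
    |‖D (run A O₀ ψ n)‖ ^ 2 - ‖D (run A O₁ ψ n)‖ ^ 2| ≤
      ∑ j ∈ Finset.range n, 4 * ‖P (run A O₀ ψ j)‖ := by
  have hunit : ∀ O, ‖D (run A O ψ n)‖ ≤ 1 := fun O =>
    (hD _).trans ((norm_run A O ψ n).trans_le hψ)
  calc _ ≤ 2 * ‖D (run A O₀ ψ n) - D (run A O₁ ψ n)‖ :=
        abs_norm_sq_sub_norm_sq_le (hunit O₀) (hunit O₁)
    _ ≤ 2 * ∑ j ∈ Finset.range n, 2 * ‖P (run A O₀ ψ j)‖ := by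
        rw [← map_sub]
        gcongr
        exact (hD _).trans (norm_run_sub_run_le A hO n)
    _ = ∑ j ∈ Finset.range n, 4 * ‖P (run A O₀ ψ j)‖ := by
        rw [Finset.mul_sum]
        simp only [← mul_assoc]
        norm_num

end run

theorem oracle_switching_general
    {E : Type*} [NormedAddCommGroup E] [InnerProductSpace ℂ E]
    {K : Type*} [Fintype K]
    {q : ℕ} {ε : ℝ}
    (ψ : K → E) (hψ : ∀ k, ‖ψ k‖ = 1)
    (Pk : K → E →ₗ[ℂ] E)
    (D : K → E →ₗ[ℂ] E)
    (hDidem : ∀ k, D k ∘ₗ D k = D k)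
    (hDsa : ∀ k (u v : E), (inner ℂ (D k u) v : ℂ) = inner ℂ u (D k v))
    (O : K → Bool → (E ≃ₗᵢ[ℂ] E))
    (hO : ∀ k (v : E), O k false (v - Pk k v) = O k true (v - Pk k v))
    (A : K → ℕ → (E ≃ₗᵢ[ℂ] E))
    (hhard : ∀ j, j ≤ q - 1 →
      (1 / (Fintype.card K : ℝ)) *
          ∑ k, ‖Pk k (run (A k) (O k false) (ψ k) j)‖ ^ 2 ≤ ε) :
    |(1 / (Fintype.card K : ℝ)) * ∑ k, ‖D k (run (A k) (O k false) (ψ k) q)‖ ^ 2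
        - (1 / (Fintype.card K : ℝ)) * ∑ k, ‖D k (run (A k) (O k true) (ψ k) q)‖ ^ 2|
      ≤ 4 * q * Real.sqrt ε := by
  set c : ℝ := 1 / (Fintype.card K : ℝ)
  set φ : K → ℕ → E := fun k j => run (A k) (O k false) (ψ k) j
  have hkey (k : K) := abs_norm_sq_apply_run_sub_le (A k)
    (LinearMap.IsSymmetricProjection.norm_apply_le ⟨hDidem k, hDsa k⟩) (hψ k).le (hO k) q
  have hmean (j : ℕ) (hj : j ∈ Finset.range q) : c * ∑ k, ‖Pk k (φ k j)‖ ≤ Real.sqrt ε :=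
    (one_div_card_mul_sum_le_sqrt _).trans
      (Real.sqrt_le_sqrt (hhard j (Nat.le_sub_one_of_lt (Finset.mem_range.mp hj))))
  calc _ = |c * ∑ k, (‖D k (run (A k) (O k false) (ψ k) q)‖ ^ 2 -
          ‖D k (run (A k) (O k true) (ψ k) q)‖ ^ 2)| := by
        rw [Finset.sum_sub_distrib, mul_sub]
    _ ≤ c * ∑ k, ∑ j ∈ Finset.range q, 4 * ‖Pk k (φ k j)‖ := by
        rw [abs_mul, abs_of_nonneg (by positivity)]
        gcongr
        exact (Finset.abs_sum_le_sum_abs _ _).trans (Finset.sum_le_sum fun k _ => hkey k)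
    _ = ∑ j ∈ Finset.range q, 4 * (c * ∑ k, ‖Pk k (φ k j)‖) := by
        simp only [Finset.mul_sum, Finset.sum_comm (s := Finset.univ)]
        ring_nf
    _ ≤ ∑ j ∈ Finset.range q, 4 * Real.sqrt ε := by
        gcongr with j hj
        exact hmean j hj
    _ = 4 * q * Real.sqrt ε := by
        rw [Finset.sum_const, Finset.card_range, nsmul_eq_mul]
        ring

/-- For each key `k`, let `ψ_k` be a unit vector, `Π_k` and `D_k` orthogonal
projections, `O_k⁰, O_k¹` unitaries agreeing on the range of `id − Π_k`, and
`A_{k,0}, …, A_{k,q}` unitaries.  Write `U_k^b := A_{k,q} O_k^b ⋯ O_k^b A_{k,0}` and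
`φ_{k,j} := A_{k,j} O_k⁰ ⋯ O_k⁰ A_{k,0} ψ_k`.  If `𝔼_k ‖Π_k φ_{k,j}‖² ≤ ε` for every
`0 ≤ j ≤ q − 1`, then `|𝔼_k ‖D_k U_k⁰ ψ_k‖² − 𝔼_k ‖D_k U_k¹ ψ_k‖²| ≤ 4q√ε`. -/
theorem oracle_switching
    {E : Type*} [NormedAddCommGroup E] [InnerProductSpace ℂ E]
    {K : Type*} [Fintype K] [Nonempty K]
    {q : ℕ} (hq : 1 ≤ q) {ε : ℝ} (hε : 0 ≤ ε)
    (ψ : K → E) (hψ : ∀ k, ‖ψ k‖ = 1)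
    (Pk : K → E →ₗ[ℂ] E)
    (hPkidem : ∀ k, Pk k ∘ₗ Pk k = Pk k)
    (hPksa : ∀ k (u v : E), (inner ℂ (Pk k u) v : ℂ) = inner ℂ u (Pk k v))
    (D : K → E →ₗ[ℂ] E)
    (hDidem : ∀ k, D k ∘ₗ D k = D k)
    (hDsa : ∀ k (u v : E), (inner ℂ (D k u) v : ℂ) = inner ℂ u (D k v))
    (O : K → Bool → (E ≃ₗᵢ[ℂ] E))
    (hO : ∀ k (v : E), O k false (v - Pk k v) = O k true (v - Pk k v))
    (A : K → ℕ → (E ≃ₗᵢ[ℂ] E))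
    (hhard : ∀ j, j ≤ q - 1 →
      (1 / (Fintype.card K : ℝ)) *
          ∑ k, ‖Pk k (run (A k) (O k false) (ψ k) j)‖ ^ 2 ≤ ε) :
    |(1 / (Fintype.card K : ℝ)) * ∑ k, ‖D k (run (A k) (O k false) (ψ k) q)‖ ^ 2
        - (1 / (Fintype.card K : ℝ)) * ∑ k, ‖D k (run (A k) (O k true) (ψ k) q)‖ ^ 2|
      ≤ 4 * q * Real.sqrt ε :=
  oracle_switching_general ψ hψ Pk D hDidem hDsa O hO A hhard
end
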